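/- For s in S(λ), the function s ↦ (1/s)·ζ[μ(λ_s)] is strictly increasing, where ζ[μ(λ_s)] = λ_s·μ(λ_s) - ψ(λ_s), μ(λ) = ψ'(λ), and λ_s is defined by μ(λ_s) = s·μ(λ). Specifically, its derivative with respect to s equals ψ(λ_s)/s², which is positive whenever λ_s > λ*. -/

import Mathlib

/-! Along `s ↦ λ_s`, the envelope identity kills all terms of
`d/ds [λ_s ψ'(λ_s) - ψ(λ_s)]` except `λ_s ψ''(λ_s) λ_s' = λ_s ψ'(λ)`, and then `ψ'(λ_s) = s ψ'(λ)`
turns the derivative of `s⁻¹ ζ[ψ'(λ_s)]` into `ψ(λ_s)/s²`. This is positive since a strictly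
convex function vanishing at `0` and at `λ* > 0` is positive beyond `λ*`. -/

theorem StrictConvexOn.map_lt_map_of_map_le {s : Set ℝ} {f : ℝ → ℝ} (hf : StrictConvexOn ℝ s f)
    {x y z : ℝ} (hx : x ∈ s) (hz : z ∈ s) (hxy : x < y) (hyz : y < z) (hfxy : f x ≤ f y) :
    f y < f z := by
  have key := hf.secant_strict_mono_aux1 hx hz hxy hyz
  nlinarith

theorem HasDerivAt.legendre_comp {ψ ψ' u : ℝ → ℝ} {a u' s : ℝ} (hu : HasDerivAt u u' s)
    (hψ : HasDerivAt ψ (ψ' (u s)) (u s)) (hψ' : HasDerivAt ψ' a (u s)) :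
    HasDerivAt (fun t => u t * ψ' (u t) - ψ (u t)) (u s * (a * u')) s := by
  refine ((hu.mul (hψ'.comp s hu)).sub (hψ.comp s hu)).congr_deriv ?_
  simp only [Function.comp_apply]
  ring

theorem HasDerivAt.inv_mul_legendre_comp {ψ ψ' u : ℝ → ℝ} {a c s : ℝ}
    (hu : HasDerivAt u (c / a) s) (hψ : HasDerivAt ψ (ψ' (u s)) (u s))
    (hψ' : HasDerivAt ψ' a (u s)) (ha : a ≠ 0) (hs : s ≠ 0) (hus : ψ' (u s) = s * c) :
    HasDerivAt (fun t => 1 / t * (u t * ψ' (u t) - ψ (u t))) (ψ (u s) / s ^ 2) s := by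
  simp only [one_div]
  refine ((hasDerivAt_inv hs).mul (hu.legendre_comp hψ hψ')).congr_deriv ?_
  rw [hus]
  field_simp
  ring

theorem rate_over_s_strictMono_general (ψ : ℝ → ℝ) (lstar l : ℝ)
    (hlstar : 0 < lstar) (hll : lstar < l)
    (hψ0 : ψ 0 = 0) (hψstar : ψ lstar = 0)
    (hconv : StrictConvexOn ℝ Set.univ ψ)
    (hder : ∀ x, HasDerivAt ψ (deriv ψ x) x)
    (hder2 : ∀ x, HasDerivAt (deriv ψ) (deriv (deriv ψ) x) x)
    (S : Set ℝ) (hS : S ⊆ Set.Ici 1) (hSconv : Convex ℝ S)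
    (lf : ℝ → ℝ)
    (hlf : ∀ s ∈ S, deriv ψ (lf s) = s * deriv ψ l)
    (hlfgt : ∀ s ∈ S, l < lf s)
    (hψ'' : ∀ s ∈ S, 0 < deriv (deriv ψ) (lf s))
    (hlf' : ∀ s ∈ S, HasDerivAt lf (deriv ψ l / deriv (deriv ψ) (lf s)) s)
    (g : ℝ → ℝ)
    (hg : ∀ s, g s = (1 / s) * (lf s * deriv ψ (lf s) - ψ (lf s))) :
    (∀ s ∈ S, HasDerivAt g (ψ (lf s) / s ^ 2) s) ∧ StrictMonoOn g S := by
  have hs0 : ∀ s ∈ S, 0 < s := fun s hs => zero_lt_one.trans_le (hS hs)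
  have hg' : ∀ s ∈ S, HasDerivAt g (ψ (lf s) / s ^ 2) s := by
    intro s hs
    rw [funext hg]
    exact (hlf' s hs).inv_mul_legendre_comp (hder _) (hder2 _) (hψ'' s hs).ne' (hs0 s hs).ne'
      (hlf s hs)
  have hψpos : ∀ s ∈ S, 0 < ψ (lf s) := fun s hs =>
    hψstar ▸ hconv.map_lt_map_of_map_le (Set.mem_univ 0) (Set.mem_univ (lf s)) hlstar
      (hll.trans (hlfgt s hs)) (hψ0.trans hψstar.symm).le
  refine ⟨hg', strictMonoOn_of_deriv_pos hSconv
    (fun s hs => (hg' s hs).continuousAt.continuousWithinAt) fun s hs => ?_⟩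
  have hsS := interior_subset hs
  rw [(hg' s hsS).deriv]
  exact div_pos (hψpos s hsS) (pow_pos (hs0 s hsS) 2)

/-- For `s ∈ S(λ)`, the function `s ↦ (1/s)·ζ[μ(λ_s)] = (1/s)(λ_s ψ'(λ_s) - ψ(λ_s))` has
derivative `ψ(λ_s)/s²` (positive since `λ_s > λ*`), and is strictly increasing on `S(λ)`. -/
theorem rate_over_s_strictMono (ψ : ℝ → ℝ) (lstar l : ℝ)
    (hlstar : 0 < lstar) (hll : lstar < l)
    (hψ0 : ψ 0 = 0) (hψstar : ψ lstar = 0)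
    (hconv : StrictConvexOn ℝ Set.univ ψ)
    (hder : ∀ x, HasDerivAt ψ (deriv ψ x) x)
    (hder2 : ∀ x, HasDerivAt (deriv ψ) (deriv (deriv ψ) x) x)
    (hμpos : 0 < deriv ψ l)
    (S : Set ℝ) (hS : S ⊆ Set.Ici 1) (hSconv : Convex ℝ S)
    (lf : ℝ → ℝ)
    (hlf : ∀ s ∈ S, deriv ψ (lf s) = s * deriv ψ l)
    (hlfgt : ∀ s ∈ S, l < lf s)
    (hψ'' : ∀ s ∈ S, 0 < deriv (deriv ψ) (lf s))
    (hlf' : ∀ s ∈ S, HasDerivAt lf (deriv ψ l / deriv (deriv ψ) (lf s)) s)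
    (g : ℝ → ℝ)
    (hg : ∀ s, g s = (1 / s) * (lf s * deriv ψ (lf s) - ψ (lf s))) :
    (∀ s ∈ S, HasDerivAt g (ψ (lf s) / s ^ 2) s) ∧ StrictMonoOn g S :=
  rate_over_s_strictMono_general ψ lstar l hlstar hll hψ0 hψstar hconv hder hder2 S hS hSconv lf hlf
    hlfgt hψ'' hlf' g hg
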